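/- Let S be a type, let D be a finite set of state–action pairs in S × ℝ, let D_e ⊆ D be a subset, let σ > 0, let α ≥ 0, and let μ : S → ℝ. Then the regularized objective ∑_{(s,a)∈D} (− log f_{μ(s),σ²}(a)) + α · ∑_{(s,a)∈D_e} KL(N(μ(s),σ²) ‖ N(a,σ²)) equals the weighted objective ∑_{(s,a)∈D} (1 + α·𝟙[(s,a) ∈ D_e]) · (− log f_{μ(s),σ²}(a)) minus the constant α · |D_e| · (1/2)·log(2π σ²), where the constant does not depend on μ. In particular, the two objectives have the same minimizers over μ. -/

import Mathlib

open MeasureTheory ProbabilityTheory Real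

/-- The Kullback–Leibler divergence `KL(P ‖ Q) = ∫ log (dP/dQ) dP` (real-valued; this
coincides with the usual KL divergence when `P ≪ Q` with finite divergence). -/
noncomputable def klDivReal {Ω : Type*} [MeasurableSpace Ω] (P Q : Measure Ω) : ℝ :=
  ∫ x, Real.log ((P.rnDeriv Q x).toReal) ∂P

/-- The regularized objective:
`∑_{(s,a)∈D} (− log f_{μ(s),σ²}(a)) + α · ∑_{(s,a)∈D_e} KL(N(μ(s),σ²) ‖ N(a,σ²))`. -/
noncomputable def regObjective {S : Type*} (D De : Finset (S × ℝ)) (σ α : ℝ)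
    (μ : S → ℝ) : ℝ :=
  (∑ p ∈ D, - Real.log (gaussianPDFReal (μ p.1) ⟨σ ^ 2, sq_nonneg σ⟩ p.2))
    + α * ∑ p ∈ De,
        klDivReal (gaussianReal (μ p.1) ⟨σ ^ 2, sq_nonneg σ⟩)
          (gaussianReal p.2 ⟨σ ^ 2, sq_nonneg σ⟩)

/-- The weighted objective:
`∑_{(s,a)∈D} (1 + α·𝟙[(s,a) ∈ D_e]) · (− log f_{μ(s),σ²}(a))`. -/
noncomputable def weightedObjective {S : Type*} [DecidableEq S]
    (D De : Finset (S × ℝ)) (σ α : ℝ) (μ : S → ℝ) : ℝ :=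
  ∑ p ∈ D, (1 + α * (if p ∈ De then (1 : ℝ) else 0))
      * (- Real.log (gaussianPDFReal (μ p.1) ⟨σ ^ 2, sq_nonneg σ⟩ p.2))

open scoped NNReal

/-!
For equal variances the log-likelihood ratio of `N(m, v)` against `N(a, v)` is affine in `x`, so
`KL(N(m, v) ‖ N(a, v)) = (m - a)² / (2v)`. This is the Gaussian negative log-likelihood
`-log f_{m,v}(a)` of the dataset action minus the normalizing constant `½ log(2πv)`: each
KL term is one more copy of the behaviour-cloning loss on `D_e`, up to a constant, which also
leaves the minimizers unchanged.
-/

lemma log_gaussianPDFReal (m : ℝ) (v : ℝ≥0) (x : ℝ) :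
    log (gaussianPDFReal m v x) = -(x - m) ^ 2 / (2 * v) - log (2 * π * v) / 2 := by
  rcases eq_or_ne v 0 with rfl | hv
  · simp [gaussianPDFReal]
  rw [gaussianPDFReal, log_mul (by positivity) (exp_pos _).ne', log_inv, log_exp,
    log_sqrt (by positivity)]
  ring

lemma rnDeriv_gaussianReal_gaussianReal (m a : ℝ) {v : ℝ≥0} (hv : v ≠ 0) :
    (gaussianReal m v).rnDeriv (gaussianReal a v)
      =ᵐ[volume] fun x ↦ (gaussianPDF a v x)⁻¹ * gaussianPDF m v x := by
  rw [gaussianReal_of_var_ne_zero a hv]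
  filter_upwards [Measure.rnDeriv_withDensity_right (gaussianReal m v) volume
      (measurable_gaussianPDF a v).aemeasurable
      (ae_of_all _ fun x ↦ (gaussianPDF_pos a hv x).ne')
      (ae_of_all _ fun _ ↦ gaussianPDF_lt_top.ne),
    rnDeriv_gaussianReal m v] with x hx hm
  rw [hx, hm]

lemma llr_gaussianReal (m a : ℝ) {v : ℝ≥0} (hv : v ≠ 0) :
    llr (gaussianReal m v) (gaussianReal a v)
      =ᵐ[gaussianReal m v] fun x ↦ ((m - a) * x + (a ^ 2 - m ^ 2) / 2) / v := by
  filter_upwards [gaussianReal_absolutelyContinuous m hv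
    (rnDeriv_gaussianReal_gaussianReal m a hv)] with x hx
  simp only [llr_def, hx]
  rw [ENNReal.toReal_mul, ENNReal.toReal_inv, toReal_gaussianPDF, toReal_gaussianPDF,
    log_mul (inv_pos.2 (gaussianPDFReal_pos a v x hv)).ne' (gaussianPDFReal_pos m v x hv).ne',
    log_inv, log_gaussianPDFReal, log_gaussianPDFReal]
  field_simp
  ring

lemma klDivReal_gaussianReal (m a : ℝ) {v : ℝ≥0} (hv : v ≠ 0) :
    klDivReal (gaussianReal m v) (gaussianReal a v) = (m - a) ^ 2 / (2 * v) := by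
  have hint : Integrable (fun x ↦ x) (gaussianReal m v) :=
    (memLp_id_gaussianReal 1).integrable le_rfl
  rw [klDivReal, ← llr_def, integral_congr_ae (llr_gaussianReal m a hv), integral_div,
    integral_add (hint.const_mul _) (integrable_const _), integral_const_mul, integral_const]
  simp only [integral_id_gaussianReal, probReal_univ, smul_eq_mul, one_mul]
  field_simp
  ring

lemma klDivReal_gaussianReal_eq_neg_log_gaussianPDFReal_sub (m a : ℝ) {v : ℝ≥0} (hv : v ≠ 0) :
    klDivReal (gaussianReal m v) (gaussianReal a v)
      = -log (gaussianPDFReal m v a) - log (2 * π * v) / 2 := by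
  rw [klDivReal_gaussianReal m a hv, log_gaussianPDFReal]
  ring

lemma Finset.sum_one_add_mul_ite_mul {ι R : Type*} [DecidableEq ι] [Semiring R]
    {D De : Finset ι} (hDe : De ⊆ D) (α : R) (f : ι → R) :
    ∑ p ∈ D, (1 + α * if p ∈ De then 1 else 0) * f p = ∑ p ∈ D, f p + α * ∑ p ∈ De, f p := by
  simp only [add_mul, one_mul, mul_assoc, ite_mul, zero_mul, Finset.sum_add_distrib,
    ← Finset.mul_sum, Finset.sum_ite_mem, Finset.inter_eq_right.mpr hDe]

lemma forall_le_iff_of_eq_sub_const {X R : Type*} [AddCommGroup R] [PartialOrder R]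
    [IsOrderedAddMonoid R] {f g : X → R} {c : R} (h : ∀ x, f x = g x - c) (x₀ : X) :
    (∀ x, f x₀ ≤ f x) ↔ ∀ x, g x₀ ≤ g x := by
  simp only [h, sub_le_sub_iff_right]

theorem regObjective_eq_weightedObjective_sub_const_general {S : Type*} [DecidableEq S]
    (D De : Finset (S × ℝ)) (hDe : De ⊆ D) (σ α : ℝ) (hσ : 0 < σ) :
    (∀ μ : S → ℝ,
      regObjective D De σ α μ
        = weightedObjective D De σ α μ
            - α * (De.card : ℝ) * (1 / 2 * Real.log (2 * Real.pi * σ ^ 2)))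
    ∧
    (∀ μ₀ : S → ℝ,
      (∀ μ : S → ℝ, regObjective D De σ α μ₀ ≤ regObjective D De σ α μ)
        ↔ (∀ μ : S → ℝ, weightedObjective D De σ α μ₀ ≤ weightedObjective D De σ α μ)) := by
  have hv : (⟨σ ^ 2, sq_nonneg σ⟩ : ℝ≥0) ≠ 0 := NNReal.coe_ne_zero.mp (pow_pos hσ 2).ne'
  have hv_coe : NNReal.toReal ⟨σ ^ 2, sq_nonneg σ⟩ = σ ^ 2 := rfl
  have hobj : ∀ μ : S → ℝ, regObjective D De σ α μ = weightedObjective D De σ α μ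
      - α * (De.card : ℝ) * (1 / 2 * Real.log (2 * Real.pi * σ ^ 2)) := by
    intro μ
    simp only [regObjective, weightedObjective, Finset.sum_one_add_mul_ite_mul hDe,
      klDivReal_gaussianReal_eq_neg_log_gaussianPDFReal_sub _ _ hv, Finset.sum_sub_distrib,
      Finset.sum_const, nsmul_eq_mul, hv_coe]
    ring
  exact ⟨hobj, forall_le_iff_of_eq_sub_const hobj⟩

/-- KL regularization as a special case of trajectory weighting (one-dimensional actions):
the regularized objective equals the weighted objective minus the constant
`α · |D_e| · (1/2)·log(2π σ²)`, which does not depend on `μ`; in particular the two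
objectives have the same minimizers over `μ`. -/
theorem regObjective_eq_weightedObjective_sub_const {S : Type*} [DecidableEq S]
    (D De : Finset (S × ℝ)) (hDe : De ⊆ D) (σ α : ℝ) (hσ : 0 < σ) (hα : 0 ≤ α) :
    (∀ μ : S → ℝ,
      regObjective D De σ α μ
        = weightedObjective D De σ α μ
            - α * (De.card : ℝ) * (1 / 2 * Real.log (2 * Real.pi * σ ^ 2)))
    ∧
    (∀ μ₀ : S → ℝ,
      (∀ μ : S → ℝ, regObjective D De σ α μ₀ ≤ regObjective D De σ α μ)
        ↔ (∀ μ : S → ℝ, weightedObjective D De σ α μ₀ ≤ weightedObjective D De σ α μ)) :=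
  regObjective_eq_weightedObjective_sub_const_general D De hDe σ α hσ
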